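/- For every finite simple graph G with chromatic number χ(G) ≤ 4 and every integer d ≥ 0, the d-improper chromatic number of the strong product of G with K_{d+1} equals the chromatic number of G: χ^d(G ⊠ K_{d+1}) = χ(G). -/

import Mathlib

open SimpleGraph Finset Matrix

namespace ImproperPaper

variable {V W : Type*}

/-- The strong product of two simple graphs. -/
def strongProd (G : SimpleGraph V) (H : SimpleGraph W) : SimpleGraph (V × W) where
  Adj p q := (p.1 = q.1 ∧ H.Adj p.2 q.2) ∨ (G.Adj p.1 q.1 ∧ p.2 = q.2) ∨
    (G.Adj p.1 q.1 ∧ H.Adj p.2 q.2)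
  symm := by
    constructor
    rintro ⟨a, b⟩ ⟨x, y⟩ (⟨h1, h2⟩ | ⟨h1, h2⟩ | ⟨h1, h2⟩)
    · exact Or.inl ⟨h1.symm, h2.symm⟩
    · exact Or.inr (Or.inl ⟨h1.symm, h2.symm⟩)
    · exact Or.inr (Or.inr ⟨h1.symm, h2.symm⟩)
  loopless := by
    constructor
    rintro ⟨a, b⟩ (⟨h1, h2⟩ | ⟨h1, h2⟩ | ⟨h1, h2⟩)
    · exact H.loopless.irrefl b h2
    · exact G.loopless.irrefl a h1
    · exact G.loopless.irrefl a h1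

/-- The lexicographical product of two simple graphs. -/
def lexProd (G : SimpleGraph V) (H : SimpleGraph W) : SimpleGraph (V × W) where
  Adj p q := G.Adj p.1 q.1 ∨ (p.1 = q.1 ∧ H.Adj p.2 q.2)
  symm := by
    constructor
    rintro ⟨a, b⟩ ⟨x, y⟩ (h | ⟨h1, h2⟩)
    · exact Or.inl h.symm
    · exact Or.inr ⟨h1.symm, h2.symm⟩
  loopless := by
    constructor
    rintro ⟨a, b⟩ (h | ⟨h1, h2⟩)
    · exact G.loopless.irrefl a h
    · exact H.loopless.irrefl b h2

instance {G : SimpleGraph V} {H : SimpleGraph W} [DecidableEq V] [DecidableEq W]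
    [DecidableRel G.Adj] [DecidableRel H.Adj] : DecidableRel (strongProd G H).Adj := fun p q =>
  show Decidable ((p.1 = q.1 ∧ H.Adj p.2 q.2) ∨ (G.Adj p.1 q.1 ∧ p.2 = q.2) ∨
    (G.Adj p.1 q.1 ∧ H.Adj p.2 q.2)) from inferInstance

/-- A colouring is `d`-improper if every colour class induces a subgraph of
maximum degree at most `d`. -/
def IsImproperColoring (G : SimpleGraph V) (d : ℕ) {α : Type*} (c : V → α) : Prop :=
  ∀ v : V, ({w | G.Adj v w ∧ c w = c v} : Set V).ncard ≤ d

/-- The `d`-improper chromatic number. -/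
noncomputable def improperChromaticNumber (G : SimpleGraph V) (d : ℕ) : ℕ :=
  sInf {n | ∃ c : V → Fin n, IsImproperColoring G d c}

/-- A colouring is `t`-clustered if every monochromatic connected component has at
most `t` vertices. -/
def IsClusteredColoring (G : SimpleGraph V) (t : ℕ) {α : Type*} (c : V → α) : Prop :=
  ∀ v : V,
    ({w | Relation.ReflTransGen (fun a b => G.Adj a b ∧ c a = c b) v w} : Set V).ncard ≤ t

/-- The `t`-clustered chromatic number. -/
noncomputable def clusteredChromaticNumber (G : SimpleGraph V) (t : ℕ) : ℕ :=
  sInf {n | ∃ c : V → Fin n, IsClusteredColoring G t c}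

/-- The chromatic number: least `n` admitting a proper colouring with `n` colours. -/
noncomputable def chromNum (G : SimpleGraph V) : ℕ :=
  sInf {n | ∃ c : V → Fin n, ∀ u v, G.Adj u v → c u ≠ c v}

/-- The `b`-fold `d`-improper chromatic number: least number of colours in an assignment
of `b` colours to each vertex such that, for every colour `x`, the set of vertices whose
colour set contains `x` induces a subgraph of maximum degree at most `d`. -/
noncomputable def bFoldImproperChromaticNumber (G : SimpleGraph V) (b d : ℕ) : ℕ :=
  sInf {n | ∃ c : V → Finset (Fin n), (∀ v, (c v).card = b) ∧
    ∀ v : V, ∀ x ∈ c v, ({w | G.Adj v w ∧ x ∈ c w} : Set V).ncard ≤ d}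

/-- The (proper) `b`-fold chromatic number. -/
noncomputable def bFoldChromaticNumber (G : SimpleGraph V) (b : ℕ) : ℕ :=
  bFoldImproperChromaticNumber G b 0

/-- The `b`-fold `t`-clustered chromatic number. -/
noncomputable def bFoldClusteredChromaticNumber (G : SimpleGraph V) (b t : ℕ) : ℕ :=
  sInf {n | ∃ c : V → Finset (Fin n), (∀ v, (c v).card = b) ∧
    ∀ x : Fin n, ∀ v : V, x ∈ c v →
      ({w | Relation.ReflTransGen (fun a b' => G.Adj a b' ∧ x ∈ c a ∧ x ∈ c b') v w} :
        Set V).ncard ≤ t}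

/-- The fractional chromatic number `χ_f(G) = inf { χ_b(G)/b : b ≥ 1 }`. -/
noncomputable def fracChromaticNumber (G : SimpleGraph V) : ℝ :=
  sInf {x : ℝ | ∃ b : ℕ, 0 < b ∧ x = (bFoldChromaticNumber G b : ℝ) / b}

/-- The fractional `d`-improper chromatic number. -/
noncomputable def fracImproperChromaticNumber (G : SimpleGraph V) (d : ℕ) : ℝ :=
  sInf {x : ℝ | ∃ b : ℕ, 0 < b ∧ x = (bFoldImproperChromaticNumber G b d : ℝ) / b}

/-- The fractional `t`-clustered chromatic number. -/
noncomputable def fracClusteredChromaticNumber (G : SimpleGraph V) (t : ℕ) : ℝ :=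
  sInf {x : ℝ | ∃ b : ℕ, 0 < b ∧ x = (bFoldClusteredChromaticNumber G b t : ℝ) / b}

/-- `lam` lists the eigenvalues of the Hermitian matrix `A` (with multiplicity) in
non-increasing order. -/
def IsEigList {n : ℕ} {A : Matrix (Fin n) (Fin n) ℝ} (hA : A.IsHermitian)
    (lam : Fin n → ℝ) : Prop :=
  Antitone lam ∧ ∃ σ : Equiv.Perm (Fin n), lam = hA.eigenvalues ∘ σ

/-- The largest size of a vertex subset inducing a subgraph of maximum degree at most `d`. -/
noncomputable def maxImproperIndep (G : SimpleGraph V) (d : ℕ) : ℕ :=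
  sSup {k | ∃ s : Set V, s.ncard = k ∧ ∀ v ∈ s, ({w | w ∈ s ∧ G.Adj v w} : Set V).ncard ≤ d}

end ImproperPaper

/-!
Take a `d`-improper colouring of `G ⊠ K_{d+1}` with at most three colours and let `a v x` be
the number of the `d + 1` copies of `v` coloured `x`. A copy of `v` coloured `x` is adjacent to
every other copy of colour `x` in the closed neighbourhood of `v`, so
`a v x + ∑_{u ~ v} a u x ≤ d + 1` whenever `a v x > 0`. These counts alone yield a proper
3-colouring of `G` using, at each vertex, a colour present on its copies: a vertex with a
majority colour takes it; a vertex missing colour `z` and split evenly between the other two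
takes `z + 1` or `z + 2`, the tie vertices missing the same colour forming a matching whose edges
are oriented by a linear order; a vertex carrying all three colours has degree at most two and
is coloured greedily at the end. So `χ(G) ≤ χ^d(G ⊠ K_{d+1})` when the right side is at most
`3`, and `χ(G) ≤ 4` covers the rest. Conversely, colouring every copy of `v` like `v` is
`d`-improper.
-/

namespace ImproperPaper

variable {V W α : Type*}

section

variable {G : SimpleGraph V}

lemma strongProd_top_adj {p q : V × W} :
    (strongProd G ⊤).Adj p q ↔ p ≠ q ∧ (p.1 = q.1 ∨ G.Adj p.1 q.1) := by
  obtain ⟨v, i⟩ := p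
  obtain ⟨u, j⟩ := q
  have : G.Adj v u → v ≠ u := G.ne_of_adj
  simp only [strongProd, top_adj, ne_eq, Prod.mk.injEq]
  tauto

lemma IsImproperColoring.comp_injective {d : ℕ} {β : Type*} {c : V → α}
    (hc : IsImproperColoring G d c) {g : α → β} (hg : g.Injective) :
    IsImproperColoring G d (g ∘ c) := by
  simpa only [IsImproperColoring, Function.comp_apply, hg.eq_iff] using hc

lemma isImproperColoring_of_injective {d : ℕ} {c : V → α} (hc : c.Injective) :
    IsImproperColoring G d c := by
  intro v
  have hempty : {w | G.Adj v w ∧ c w = c v} = ∅ := by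
    ext w
    simp only [Set.mem_ofPred_eq, Set.mem_empty_iff_false, iff_false, not_and]
    rintro hvw hcw
    exact G.ne_of_adj hvw (hc hcw).symm
  simp [hempty]

lemma improperChromaticNumber_le {d n : ℕ} (c : V → Fin n) (hc : IsImproperColoring G d c) :
    improperChromaticNumber G d ≤ n :=
  Nat.sInf_le ⟨c, hc⟩

lemma exists_isImproperColoring_improperChromaticNumber [Finite V] (G : SimpleGraph V)
    (d : ℕ) : ∃ c : V → Fin (improperChromaticNumber G d), IsImproperColoring G d c :=
  Nat.sInf_mem (s := {n | ∃ c : V → Fin n, IsImproperColoring G d c})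
    ⟨_, _, isImproperColoring_of_injective (Finite.equivFin V).injective⟩

lemma chromNum_le {n : ℕ} (c : V → Fin n) (hc : ∀ u v, G.Adj u v → c u ≠ c v) :
    chromNum G ≤ n :=
  Nat.sInf_le ⟨c, hc⟩

lemma exists_coloring_chromNum [Finite V] (G : SimpleGraph V) :
    ∃ c : V → Fin (chromNum G), ∀ u v, G.Adj u v → c u ≠ c v :=
  Nat.sInf_mem (s := {n | ∃ c : V → Fin n, ∀ u v, G.Adj u v → c u ≠ c v})
    ⟨_, Finite.equivFin V, fun _ _ huv he => G.ne_of_adj huv ((Finite.equivFin V).injective he)⟩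

lemma isImproperColoring_strongProd_top_comp_fst [Fintype W] {d : ℕ}
    (hW : Fintype.card W = d + 1) {c : V → α} (hc : ∀ u v, G.Adj u v → c u ≠ c v) :
    IsImproperColoring (strongProd G (⊤ : SimpleGraph W)) d (c ∘ Prod.fst) := by
  classical
  rintro ⟨v, i⟩
  have hsub :
      {w | (strongProd G ⊤).Adj (v, i) w ∧ (c ∘ Prod.fst) w = (c ∘ Prod.fst) (v, i)} ⊆
        ↑(({v} ×ˢ univ : Finset (V × W)).erase (v, i)) := by
    rintro ⟨u, j⟩ ⟨hadj, hcol⟩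
    obtain ⟨hne, rfl | hvu⟩ := strongProd_top_adj.1 hadj
    · simpa using hne.symm
    · exact absurd hcol.symm (hc v u hvu)
  calc _ ≤ _ := Set.ncard_le_ncard hsub (Finset.finite_toSet _)
    _ = d := by
      rw [Set.ncard_coe_finset, card_erase_of_mem (by simp), card_product, card_singleton,
        card_univ, hW]
      simp

end

/-- `a v x` stands for the number of copies of `v` coloured `x` in an `(s - 1)`-improper colouring
of `G ⊠ K_s`. -/
structure IsImproperProfile (G : SimpleGraph V) [Fintype V] [DecidableRel G.Adj] [Fintype α]
    (s : ℕ) (a : V → α → ℕ) : Prop where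
  sum_eq (v : V) : ∑ x, a v x = s
  add_sum_neighborFinset_le {v : V} {x : α} :
    0 < a v x → a v x + ∑ u ∈ G.neighborFinset v, a u x ≤ s

def IsTie (s : ℕ) (a : V → α → ℕ) (v : V) (z : α) : Prop :=
  (∀ x, 2 * a v x ≤ s) ∧ a v z = 0

open Classical in
/-- Vertices carrying all three colours get the junk value `0`; `exists_coloring` recolours them
greedily. -/
noncomputable def profileColoring [LinearOrder V] (G : SimpleGraph V) (s : ℕ)
    (a : V → Fin 3 → ℕ) (v : V) : Fin 3 :=
  if ht : ∃ z, IsTie s a v z then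
    if ∃ u < v, G.Adj v u ∧ IsTie s a u ht.choose then ht.choose + 2 else ht.choose + 1
  else if hM : ∃ x, s < 2 * a v x then hM.choose else 0

variable {G : SimpleGraph V} [Fintype V] [DecidableRel G.Adj]

lemma exists_recoloring_of_card_neighborFinset_lt [Fintype α] (c : V → α)
    (S : Finset V) (hS : ∀ v ∈ S, #(G.neighborFinset v) < Fintype.card α) :
    ∃ c' : V → α, (∀ v ∉ S, c' v = c v) ∧ ∀ v ∈ S, ∀ u, G.Adj v u → c' v ≠ c' u := by
  classical
  induction S using Finset.induction_on with
  | empty => exact ⟨c, fun _ _ => rfl, by simp⟩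
  | @insert v S hvS ih =>
    obtain ⟨c', hoff, hon⟩ := ih fun w hw => hS w (mem_insert_of_mem hw)
    obtain ⟨x, -, hx⟩ := exists_mem_notMem_of_card_lt_card
      ((card_image_le (f := c')).trans_lt ((hS v (mem_insert_self v S)).trans_eq card_univ.symm))
    have hfree : ∀ u, G.Adj v u → c' u ≠ x := fun u hvu hu =>
      hx (mem_image.2 ⟨u, (G.mem_neighborFinset v u).2 hvu, hu⟩)
    refine ⟨Function.update c' v x, fun w hw => ?_, fun w hw u hwu => ?_⟩
    · rw [mem_insert, not_or] at hw
      rw [Function.update_of_ne hw.1, hoff w hw.2]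
    obtain rfl | hwS := mem_insert.1 hw
    · rw [Function.update_self, Function.update_of_ne (G.ne_of_adj hwu).symm]
      exact (hfree u hwu).symm
    · have hwv : w ≠ v := fun h => hvS (h ▸ hwS)
      rw [Function.update_of_ne hwv]
      by_cases huv : u = v
      · subst huv
        rw [Function.update_self]
        exact hfree w hwu.symm
      · rw [Function.update_of_ne huv]
        exact hon w hwS u hwu

lemma IsImproperColoring.isImproperProfile [Fintype W] [Fintype α] [DecidableEq α] {d : ℕ}
    (hW : Fintype.card W = d + 1) {c : V × W → α}
    (hc : IsImproperColoring (strongProd G (⊤ : SimpleGraph W)) d c) :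
    IsImproperProfile G (d + 1) (fun v x => #{j | c (v, j) = x}) where
  sum_eq v := by
    rw [sum_card_fiberwise_eq_card_filter]
    simp [hW]
  add_sum_neighborFinset_le {v x} hpos := by
    classical
    obtain ⟨j, hj⟩ := card_pos.1 hpos
    have hcj : c (v, j) = x := (mem_filter.1 hj).2
    set T := {w ∈ insert v (G.neighborFinset v) ×ˢ (univ : Finset W) | c w = x}
    have hT : #T = #{j | c (v, j) = x} + ∑ u ∈ G.neighborFinset v, #{j | c (u, j) = x} := by
      rw [card_filter, sum_product, sum_insert (by simp)]
      simp only [card_filter]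
    have hsub : ↑(T.erase (v, j)) ⊆ {w | (strongProd G ⊤).Adj (v, j) w ∧ c w = c (v, j)} := by
      rintro ⟨u, i⟩ hui
      simp only [coe_erase, Set.mem_sdiff, mem_coe, Set.mem_singleton_iff, T, mem_filter,
        mem_product, mem_insert, mem_neighborFinset, mem_univ, and_true] at hui
      obtain ⟨⟨hu, hci⟩, hne⟩ := hui
      refine ⟨strongProd_top_adj.2 ⟨Ne.symm hne, hu.imp Eq.symm id⟩, hci.trans hcj.symm⟩
    have hle := (Set.ncard_le_ncard hsub (Set.toFinite _)).trans (hc (v, j))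
    rw [Set.ncard_coe_finset, card_erase_of_mem (s := T) (by simp [T, hcj])] at hle
    omega

namespace IsImproperProfile

section

variable [Fintype α] {s : ℕ} {a : V → α → ℕ} (h : IsImproperProfile G s a)
include h

lemma add_le_of_ne (v : V) {x y : α} (hxy : x ≠ y) : a v x + a v y ≤ s :=
  h.sum_eq v ▸ add_le_sum (fun _ _ => Nat.zero_le _) (mem_univ x) (mem_univ y) hxy

lemma add_le_of_adj {u v : V} {x : α} (huv : G.Adj u v) (hx : 0 < a u x) :
    a u x + a v x ≤ s :=
  (Nat.add_le_add_left (single_le_sum (f := fun w => a w x) (fun _ _ => Nat.zero_le _)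
    ((G.mem_neighborFinset u v).2 huv)) _).trans (h.add_sum_neighborFinset_le hx)

lemma add_add_le_of_adj {u v w : V} {x : α} (huv : G.Adj u v) (huw : G.Adj u w) (hvw : v ≠ w)
    (hx : 0 < a u x) : a u x + a v x + a w x ≤ s := by
  have hpair : a v x + a w x ≤ ∑ t ∈ G.neighborFinset u, a t x :=
    add_le_sum (f := fun t => a t x) (fun _ _ => Nat.zero_le _)
      ((G.mem_neighborFinset u v).2 huv) ((G.mem_neighborFinset u w).2 huw) hvw
  have := h.add_sum_neighborFinset_le hx
  omega

lemma card_neighborFinset_lt {v : V} (hs : 0 < s) (hv : ∀ x, a v x ≠ 0) :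
    #(G.neighborFinset v) < Fintype.card α := by
  have key : ∑ x, (a v x + ∑ u ∈ G.neighborFinset v, a u x) ≤ ∑ _x : α, s :=
    sum_le_sum fun x _ => h.add_sum_neighborFinset_le (Nat.pos_of_ne_zero (hv x))
  rw [sum_add_distrib, sum_comm, h.sum_eq, sum_congr rfl fun u _ => h.sum_eq u] at key
  simp only [sum_const, card_univ, smul_eq_mul] at key
  exact Nat.lt_of_succ_le (Nat.le_of_mul_le_mul_right (by linarith) hs)

end

variable {s : ℕ} {a : V → Fin 3 → ℕ} (h : IsImproperProfile G s a)
include h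

lemma two_mul_eq_of_isTie {v : V} {z x : Fin 3} (hv : IsTie s a v z) (hxz : x ≠ z) :
    2 * a v x = s := by
  obtain ⟨hle, hz⟩ := hv
  have hsum := h.sum_eq v
  rw [Fin.sum_univ_three] at hsum
  have := hle 0
  have := hle 1
  have := hle 2
  have hfin : ∀ t : Fin 3, t = 0 ∨ t = 1 ∨ t = 2 := by decide
  rcases hfin z with rfl | rfl | rfl <;> rcases hfin x with rfl | rfl | rfl <;>
    first | exact absurd rfl hxz | omega

lemma isTie_unique {v : V} {z z' : Fin 3} (hs : 0 < s) (hz : IsTie s a v z)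
    (hz' : IsTie s a v z') : z = z' := by
  by_contra hne
  have := h.two_mul_eq_of_isTie hz (Ne.symm hne)
  have := hz'.2
  omega

lemma eq_of_isTie_of_adj {u v : V} {z x : Fin 3} (hs : 0 < s) (hv : IsTie s a v z)
    (hvu : G.Adj v u) (hu : s < 2 * a u x) : x = z := by
  by_contra hxz
  have hvx := h.two_mul_eq_of_isTie hv hxz
  have := h.add_le_of_adj hvu (x := x) (by omega)
  omega

lemma false_of_isTie_of_adj_of_adj {u v w : V} {z zv zw x : Fin 3} (hs : 0 < s)
    (hu : IsTie s a u z) (hv : IsTie s a v zv) (hw : IsTie s a w zw) (huv : G.Adj u v)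
    (huw : G.Adj u w) (hvw : v ≠ w) (hxz : x ≠ z) (hxv : x ≠ zv) (hxw : x ≠ zw) : False := by
  have := h.two_mul_eq_of_isTie hu hxz
  have := h.two_mul_eq_of_isTie hv hxv
  have := h.two_mul_eq_of_isTie hw hxw
  have := h.add_add_le_of_adj huv huw hvw (x := x) (by omega)
  omega

lemma eq_of_isTie_of_adj_of_adj {u v w : V} {z : Fin 3} (hs : 0 < s) (hu : IsTie s a u z)
    (hv : IsTie s a v z) (hw : IsTie s a w z) (huv : G.Adj u v) (huw : G.Adj u w) :
    v = w := by
  have hz : ∀ t : Fin 3, t + 1 ≠ t := by decide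
  by_contra hvw
  exact h.false_of_isTie_of_adj_of_adj hs hu hv hw huv huw hvw (hz z) (hz z) (hz z)

lemma not_isTie_of_adj_of_isTie_ne {u v w : V} {z zv : Fin 3} (hs : 0 < s)
    (hu : IsTie s a u z) (hv : IsTie s a v zv) (hne : zv ≠ z) (huv : G.Adj u v)
    (huw : G.Adj u w) : ¬ IsTie s a w z := by
  intro hw
  have third : ∀ t t' : Fin 3, ∃ x, x ≠ t ∧ x ≠ t' := by decide
  obtain ⟨x, hxz, hxv⟩ := third z zv
  have hvw : v ≠ w := by
    rintro rfl
    exact hne (h.isTie_unique hs hv hw)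
  exact h.false_of_isTie_of_adj_of_adj hs hu hv hw huv huw hvw hxz hxv hxz

section

variable [LinearOrder V]

lemma profileColoring_of_majority {v : V} {x : Fin 3} (hx : s < 2 * a v x) :
    profileColoring G s a v = x := by
  have hM : ∃ x, s < 2 * a v x := ⟨x, hx⟩
  have ht : ¬ ∃ z, IsTie s a v z := fun ⟨_, hle, _⟩ => (hle x).not_gt hx
  rw [profileColoring, dif_neg ht, dif_pos hM]
  by_contra hne
  have := h.add_le_of_ne v hne
  have := hM.choose_spec
  omega

lemma profileColoring_eq_add_two {u v : V} {z : Fin 3} (hs : 0 < s) (hv : IsTie s a v z)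
    (hu : IsTie s a u z) (hlt : u < v) (hvu : G.Adj v u) : profileColoring G s a v = z + 2 := by
  have ht : ∃ z, IsTie s a v z := ⟨z, hv⟩
  rw [profileColoring, dif_pos ht, h.isTie_unique hs ht.choose_spec hv, if_pos ⟨u, hlt, hvu, hu⟩]

lemma profileColoring_eq_add_one {v : V} {z : Fin 3} (hs : 0 < s) (hv : IsTie s a v z)
    (hno : ∀ u < v, G.Adj v u → ¬ IsTie s a u z) : profileColoring G s a v = z + 1 := by
  have ht : ∃ z, IsTie s a v z := ⟨z, hv⟩
  rw [profileColoring, dif_pos ht, h.isTie_unique hs ht.choose_spec hv,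
    if_neg fun ⟨u, hlt, hvu, hu⟩ => hno u hlt hvu hu]

lemma profileColoring_eq_add_one_of_lt {u v : V} {z : Fin 3} (hs : 0 < s)
    (hu : IsTie s a u z) (hv : IsTie s a v z) (huv : G.Adj u v) (hlt : u < v) :
    profileColoring G s a u = z + 1 :=
  h.profileColoring_eq_add_one hs hu fun _ hwu huw hw =>
    lt_asymm hlt (h.eq_of_isTie_of_adj_of_adj hs hu hv hw huv huw ▸ hwu)

lemma profileColoring_ne_of_isTie {v : V} {z : Fin 3} (hs : 0 < s) (hv : IsTie s a v z) :
    profileColoring G s a v ≠ z := by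
  have hz : ∀ t : Fin 3, t + 2 ≠ t ∧ t + 1 ≠ t := by decide
  by_cases hpartner : ∃ u < v, G.Adj v u ∧ IsTie s a u z
  · obtain ⟨u, hlt, hvu, hu⟩ := hpartner
    rw [h.profileColoring_eq_add_two hs hv hu hlt hvu]
    exact (hz z).1
  · push Not at hpartner
    rw [h.profileColoring_eq_add_one hs hv hpartner]
    exact (hz z).2

lemma pos_profileColoring {v : V} {z : Fin 3} (hs : 0 < s) (hz : a v z = 0) :
    0 < a v (profileColoring G s a v) := by
  by_cases hM : ∃ x, s < 2 * a v x
  · obtain ⟨x, hx⟩ := hM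
    rw [h.profileColoring_of_majority hx]
    omega
  · push Not at hM
    have hv : IsTie s a v z := ⟨hM, hz⟩
    have := h.two_mul_eq_of_isTie hv (h.profileColoring_ne_of_isTie hs hv)
    omega

lemma profileColoring_ne_of_isTie_of_isTie {u v : V} {zu zv : Fin 3} (hs : 0 < s)
    (hu : IsTie s a u zu) (hv : IsTie s a v zv) (huv : G.Adj u v) :
    profileColoring G s a u ≠ profileColoring G s a v := by
  by_cases hzz : zu = zv
  · subst hzz
    have hz : ∀ t : Fin 3, t + 1 ≠ t + 2 := by decide
    rcases lt_or_gt_of_ne (G.ne_of_adj huv) with hlt | hlt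
    · rw [h.profileColoring_eq_add_one_of_lt hs hu hv huv hlt,
        h.profileColoring_eq_add_two hs hv hu hlt huv.symm]
      exact hz zu
    · rw [h.profileColoring_eq_add_one_of_lt hs hv hu huv.symm hlt,
        h.profileColoring_eq_add_two hs hu hv hlt huv]
      exact (hz zu).symm
  · rw [h.profileColoring_eq_add_one hs hu fun _ _ huw =>
        h.not_isTie_of_adj_of_isTie_ne hs hu hv (Ne.symm hzz) huv huw,
      h.profileColoring_eq_add_one hs hv fun _ _ hvw =>
        h.not_isTie_of_adj_of_isTie_ne hs hv hu hzz huv.symm hvw]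
    exact fun he => hzz (add_right_cancel he)

lemma profileColoring_ne_of_adj {u v : V} {zu zv : Fin 3} (hs : 0 < s) (hu : a u zu = 0)
    (hv : a v zv = 0) (huv : G.Adj u v) : profileColoring G s a u ≠ profileColoring G s a v := by
  by_cases hMu : ∃ x, s < 2 * a u x
  · obtain ⟨x, hx⟩ := hMu
    by_cases hMv : ∃ y, s < 2 * a v y
    · obtain ⟨y, hy⟩ := hMv
      rw [h.profileColoring_of_majority hx, h.profileColoring_of_majority hy]
      rintro rfl
      have := h.add_le_of_adj huv (x := x) (by omega)
      omega
    · push Not at hMv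
      have hvt : IsTie s a v zv := ⟨hMv, hv⟩
      rw [h.profileColoring_of_majority hx, h.eq_of_isTie_of_adj hs hvt huv.symm hx]
      exact (h.profileColoring_ne_of_isTie hs hvt).symm
  · push Not at hMu
    have hut : IsTie s a u zu := ⟨hMu, hu⟩
    by_cases hMv : ∃ y, s < 2 * a v y
    · obtain ⟨y, hy⟩ := hMv
      rw [h.profileColoring_of_majority hy, h.eq_of_isTie_of_adj hs hut huv hy]
      exact h.profileColoring_ne_of_isTie hs hut
    · push Not at hMv
      exact h.profileColoring_ne_of_isTie_of_isTie hs hut ⟨hMv, hv⟩ huv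

end

theorem exists_coloring (hs : 0 < s) :
    ∃ c : V → Fin 3, (∀ v, 0 < a v (c v)) ∧ ∀ u v, G.Adj u v → c u ≠ c v := by
  classical
  let _ : LinearOrder V := LinearOrder.lift' _ (Fintype.equivFin V).injective
  set S : Finset V := {v | ∀ x, a v x ≠ 0}
  have hS : ∀ v ∉ S, ∃ z, a v z = 0 := fun v hv => by simpa [S] using hv
  obtain ⟨c, hoff, hon⟩ := exists_recoloring_of_card_neighborFinset_lt (profileColoring G s a) S
    fun v hv => h.card_neighborFinset_lt hs (mem_filter.1 hv).2
  refine ⟨c, fun v => ?_, fun u v huv => ?_⟩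
  · by_cases hv : v ∈ S
    · exact Nat.pos_of_ne_zero ((mem_filter.1 hv).2 _)
    · obtain ⟨z, hz⟩ := hS v hv
      rw [hoff v hv]
      exact h.pos_profileColoring hs hz
  · by_cases hu : u ∈ S
    · exact hon u hu v huv
    by_cases hv : v ∈ S
    · exact (hon v hv u huv.symm).symm
    obtain ⟨zu, hzu⟩ := hS u hu
    obtain ⟨zv, hzv⟩ := hS v hv
    rw [hoff u hu, hoff v hv]
    exact h.profileColoring_ne_of_adj hs hzu hzv huv

end IsImproperProfile

theorem exists_coloring_of_isImproperColoring_strongProd_top [Fintype W] {d m : ℕ} (hm : m ≤ 3)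
    (hW : Fintype.card W = d + 1) {c : V × W → Fin m}
    (hc : IsImproperColoring (strongProd G (⊤ : SimpleGraph W)) d c) :
    ∃ c' : V → Fin m, ∀ u v, G.Adj u v → c' u ≠ c' v := by
  obtain ⟨c₃, hpos, hproper⟩ :=
    ((hc.comp_injective (Fin.castLE_injective hm)).isImproperProfile hW).exists_coloring d.succ_pos
  have hcopy : ∀ v, ∃ j, Fin.castLE hm (c (v, j)) = c₃ v := fun v => by
    obtain ⟨j, hj⟩ := card_pos.1 (hpos v)
    exact ⟨j, (mem_filter.1 hj).2⟩
  choose j hj using hcopy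
  refine ⟨fun v => c (v, j v), fun u v huv he => hproper u v huv ?_⟩
  rw [← hj u, ← hj v]
  exact congrArg _ he

end ImproperPaper

open ImproperPaper in
theorem stmt_17 {V : Type*} [Fintype V] (G : SimpleGraph V) (d : ℕ)
    (hchi : chromNum G ≤ 4) :
    improperChromaticNumber (strongProd G (⊤ : SimpleGraph (Fin (d + 1)))) d =
      chromNum G := by
  classical
  obtain ⟨c, hc⟩ := exists_coloring_chromNum G
  refine le_antisymm (improperChromaticNumber_le _
    (isImproperColoring_strongProd_top_comp_fst (Fintype.card_fin _) hc)) ?_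
  obtain ⟨f, hf⟩ := exists_isImproperColoring_improperChromaticNumber
    (strongProd G (⊤ : SimpleGraph (Fin (d + 1)))) d
  by_cases hm : improperChromaticNumber (strongProd G (⊤ : SimpleGraph (Fin (d + 1)))) d ≤ 3
  · obtain ⟨c', hc'⟩ :=
      exists_coloring_of_isImproperColoring_strongProd_top hm (Fintype.card_fin _) hf
    exact chromNum_le c' hc'
  · omega
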